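/- arXiv:1205.6454 — 3 statements merged into one kernel-verified Lean document; each statement's English description precedes it below -/
import Mathlib

section
/- Let s, h: ℝ → ℝ be smooth 2π-periodic functions with s'' + s > 0 (s the support function of a convex body K of area A > 0). Then ∫₀^{2π} h(h''+s) dθ · ∫₀^{2π} s(s''+s) dθ ≤ (∫₀^{2π} h(s''+s) dθ)², i.e. the planar Minkowski mixed-volume inequality V(h,h)·V(s,s) ≤ V(h,s)² holds, where V(f,g) := (1/2)∫₀^{2π} f(g''+g) dθ. -/
open Real intervalIntegral

open MeasureTheory AddCircle Set
open scoped ENNReal ContDiff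


private lemma parseval_aux {T : ℝ} [hT : Fact (0 < T)] {u : ℝ → ℝ} (hu : Continuous u)
    (hp : Function.Periodic u T) :
    Summable (fun n : ℤ =>
      ‖fourierCoeffOn (lt_add_of_pos_right 0 hT.out) (fun x : ℝ => (u x : ℂ)) n‖ ^ 2) ∧
    (∫ x in (0:ℝ)..T, u x ^ 2)
      = T * ∑' n : ℤ,
          ‖fourierCoeffOn (lt_add_of_pos_right 0 hT.out) (fun x : ℝ => (u x : ℂ)) n‖ ^ 2 := by
  set F : ℝ → ℂ := fun x => (u x : ℂ) with hF
  have hF0 : F 0 = F (0 + T) := by simp only [hF]; rw [hp 0]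
  have hFc : Continuous F := Complex.continuous_ofReal.comp hu
  set G : C(AddCircle T, ℂ) :=
    ⟨AddCircle.liftIco T 0 F, AddCircle.liftIco_continuous hF0 hFc.continuousOn⟩ with hG
  have hGcoeff : ∀ n : ℤ, fourierCoeff (⇑G) n
      = fourierCoeffOn (lt_add_of_pos_right 0 hT.out) F n := fun n =>
    fourierCoeff_liftIco_eq F n
  set FL := ContinuousMap.toLp (E := ℂ) 2 haarAddCircle ℂ G with hFL
  have hcoeffL : ∀ n : ℤ, fourierCoeff (FL : AddCircle T → ℂ) n = fourierCoeff (⇑G) n :=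
    fourierCoeff_toLp G
  -- summability
  have hsummable : Summable (fun n : ℤ => ‖fourierCoeff (⇑G) n‖ ^ 2) := by
    have h1 : Summable fun n : ℤ => ‖fourierBasis.repr FL n‖ ^ (2 : ℝ≥0∞).toReal :=
      (memℓp_gen_iff (by norm_num)).mp (lp.memℓp (fourierBasis.repr FL))
    refine h1.congr fun n => ?_
    rw [fourierBasis_repr, hcoeffL]
    norm_num
  -- Parseval
  have hpars := tsum_sq_fourierCoeff FL
  have hae : ∫ t, ‖FL t‖ ^ 2 ∂haarAddCircle = ∫ t, ‖G t‖ ^ 2 ∂haarAddCircle := by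
    refine integral_congr_ae ?_
    filter_upwards [ContinuousMap.coeFn_toLp (p := 2) haarAddCircle (𝕜 := ℂ) G] with t ht
    rw [ht]
  -- haar integral to interval integral
  have hinterval : ∫ x in (0:ℝ)..(0 + T), ‖G (x : AddCircle T)‖ ^ 2
      = ∫ t, ‖G t‖ ^ 2 ∂(volume : Measure (AddCircle T)) :=
    AddCircle.intervalIntegral_preimage T 0 (fun t => ‖G t‖ ^ 2)
  have hvol : ∫ t, ‖G t‖ ^ 2 ∂(volume : Measure (AddCircle T))
      = T * ∫ t, ‖G t‖ ^ 2 ∂haarAddCircle := by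
    rw [volume_eq_smul_haarAddCircle, MeasureTheory.integral_smul_measure, ENNReal.toReal_ofReal hT.out.le,
      smul_eq_mul]
  have hGu : ∫ x in (0:ℝ)..(0 + T), ‖G (x : AddCircle T)‖ ^ 2
      = ∫ x in (0:ℝ)..(0 + T), u x ^ 2 := by
    refine intervalIntegral.integral_congr_ae ?_
    have hne : ∀ᵐ x : ℝ, x ≠ 0 + T := by
      refine ae_iff.mpr ?_
      convert Real.volume_singleton (a := 0 + T) using 2
      ext x; simp
    filter_upwards [hne] with x hx hmem
    rw [uIoc_of_le (by linarith [hT.out] : (0:ℝ) ≤ 0 + T)] at hmem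
    have hxIco : x ∈ Ico (0:ℝ) (0 + T) := ⟨hmem.1.le, lt_of_le_of_ne hmem.2 hx⟩
    have : G (x : AddCircle T) = F x := AddCircle.liftIco_coe_apply (f := F) hxIco
    rw [this, hF]
    simp [Complex.norm_real, sq_abs]
  constructor
  · exact hsummable.congr fun n => by rw [← hGcoeff]
  · have : (∫ x in (0:ℝ)..T, u x ^ 2) = ∫ x in (0:ℝ)..(0 + T), u x ^ 2 := by rw [zero_add]
    rw [this, ← hGu, hinterval, hvol, ← hae, ← hpars]
    congr 1
    exact tsum_congr fun n => by rw [hcoeffL, hGcoeff]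

private lemma periodic_deriv_aux {g : ℝ → ℝ} {c : ℝ} (hg : Function.Periodic g c) :
    Function.Periodic (deriv g) c := by
  intro x
  have h1 : (fun y => g (y + c)) = g := funext hg
  calc deriv g (x + c) = deriv (fun y => g (y + c)) x := (deriv_comp_add_const g c x).symm
    _ = deriv g x := by rw [h1]

private lemma wirtinger_aux {g : ℝ → ℝ} (hg : ContDiff ℝ (⊤ : ℕ∞) g)
    (hper : Function.Periodic g (2 * π))
    (hzero : (∫ θ in (0:ℝ)..(2 * π), g θ) = 0) :
    (∫ θ in (0:ℝ)..(2 * π), g θ ^ 2) ≤ ∫ θ in (0:ℝ)..(2 * π), deriv g θ ^ 2 := by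
  haveI hT : Fact (0 < 2 * π) := ⟨Real.two_pi_pos⟩
  have hgc : Continuous g := hg.continuous
  have hgd : Differentiable ℝ g := hg.differentiable (by simp)
  have hg'c : Continuous (deriv g) := hg.continuous_deriv (by simp)
  have hper' : Function.Periodic (deriv g) (2 * π) := periodic_deriv_aux hper
  obtain ⟨hsum, heq⟩ := parseval_aux (T := 2 * π) hgc hper
  obtain ⟨hsum', heq'⟩ := parseval_aux (T := 2 * π) hg'c hper'
  set c : ℤ → ℂ := fun n =>
    fourierCoeffOn (lt_add_of_pos_right 0 hT.out) (fun x : ℝ => (g x : ℂ)) n with hc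
  set c' : ℤ → ℂ := fun n =>
    fourierCoeffOn (lt_add_of_pos_right 0 hT.out) (fun x : ℝ => ((deriv g x : ℝ) : ℂ)) n with hc'
  have hcn : ∀ n, c n = fourierCoeffOn (lt_add_of_pos_right 0 hT.out)
      (fun x : ℝ => ((g x : ℝ) : ℂ)) n := fun n => rfl
  have hc'n : ∀ n, c' n = fourierCoeffOn (lt_add_of_pos_right 0 hT.out)
      (fun x : ℝ => ((deriv g x : ℝ) : ℂ)) n := fun n => rfl
  have hc0 : c 0 = 0 := by
    rw [hcn 0]
    rw [fourierCoeffOn_eq_integral]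
    simp only [neg_zero, fourier_zero, one_smul]
    have : (∫ x in (0:ℝ)..(0 + 2 * π), ((g x : ℝ) : ℂ))
        = ((∫ x in (0:ℝ)..(0 + 2 * π), g x : ℝ) : ℂ) := by
      exact RCLike.intervalIntegral_ofReal
    rw [this]
    rw [zero_add] at *
    rw [hzero]
    simp
  have hder : ∀ x ∈ Set.uIcc (0:ℝ) (0 + 2 * π),
      HasDerivAt (fun x : ℝ => ((g x : ℝ) : ℂ)) ((deriv g x : ℝ) : ℂ) x :=
    fun x _ => ((hgd x).hasDerivAt).ofReal_comp
  have hint : IntervalIntegrable (fun x : ℝ => ((deriv g x : ℝ) : ℂ)) volume 0 (0 + 2 * π) :=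
    (Complex.continuous_ofReal.comp hg'c).intervalIntegrable _ _
  have hrel : ∀ n : ℤ, n ≠ 0 → ‖c' n‖ = |(n : ℝ)| * ‖c n‖ := by
    intro n hn
    have h1 := fourierCoeffOn_of_hasDerivAt (lt_add_of_pos_right 0 hT.out) hn hder hint
    have h2 : ((g (0 + 2 * π) : ℝ) : ℂ) = ((g 0 : ℝ) : ℂ) := by
      norm_cast; exact hper 0
    rw [h2, sub_self, mul_zero, zero_sub] at h1
    rw [← hcn n, ← hc'n n] at h1
    have h3 : ‖c n‖ = ‖(1 / (-2 * (π:ℂ) * Complex.I * (n:ℂ)))‖ *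
        (‖((0 + 2 * π - 0 : ℝ) : ℂ)‖ * ‖c' n‖) := by
      rw [h1, norm_mul, norm_neg, norm_mul]
      norm_num
    have h4 : ‖(1 / (-2 * (π:ℂ) * Complex.I * (n:ℂ)))‖ = (2 * π * |(n:ℝ)|)⁻¹ := by
      rw [norm_div, norm_one]
      simp [norm_mul, Complex.norm_I, Complex.norm_real, Complex.norm_intCast, abs_of_pos pi_pos,
        pi_pos.le]
    have h5 : ‖((0 + 2 * π - 0 : ℝ) : ℂ)‖ = 2 * π := by
      simp [Complex.norm_real, abs_of_pos Real.two_pi_pos]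
      exact pi_pos.le
    have hn' : (0:ℝ) < |(n:ℝ)| := by
      simp only [abs_pos]; exact_mod_cast hn
    rw [h4, h5] at h3
    rw [h3]
    field_simp
  have hterm : ∀ n : ℤ, ‖c n‖ ^ 2 ≤ ‖c' n‖ ^ 2 := by
    intro n
    by_cases hn : n = 0
    · rw [hn, hc0]; simp
    · rw [hrel n hn]
      have h6 : (1:ℝ) ≤ |(n:ℝ)| := by exact_mod_cast Int.one_le_abs (by exact_mod_cast hn)
      have h7 : (1:ℝ) * 1 ≤ |(n:ℝ)| * |(n:ℝ)| := mul_le_mul h6 h6 zero_le_one (by linarith)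
      nlinarith [h7, sq_nonneg (‖c n‖), norm_nonneg (c n)]
  rw [heq, heq']
  have := Summable.tsum_le_tsum hterm hsum hsum'
  nlinarith [Real.two_pi_pos]

private lemma ibp_aux {f g : ℝ → ℝ} (hf : ContDiff ℝ (⊤ : ℕ∞) f) (hg : ContDiff ℝ (⊤ : ℕ∞) g)
    (hfp : Function.Periodic f (2 * π)) (hgp : Function.Periodic g (2 * π)) :
    (∫ θ in (0:ℝ)..(2 * π), f θ * (deriv (deriv g) θ + g θ))
      = ∫ θ in (0:ℝ)..(2 * π), (f θ * g θ - deriv f θ * deriv g θ) := by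
  have hfc : Continuous f := hf.continuous
  have hgc : Continuous g := hg.continuous
  have hfd : Differentiable ℝ f := hf.differentiable (by simp)
  have hf'c : Continuous (deriv f) := hf.continuous_deriv (by simp)
  have hg' : ContDiff ℝ ∞ (deriv g) := (contDiff_infty_iff_deriv.mp (hg.of_le (by simp))).2
  have hg'c : Continuous (deriv g) := hg'.continuous
  have hg'd : Differentiable ℝ (deriv g) := hg'.differentiable (by simp)
  have hg''c : Continuous (deriv (deriv g)) := hg'.continuous_deriv (by exact_mod_cast le_top)
  have hparts := intervalIntegral.integral_mul_deriv_eq_deriv_mul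
    (u := f) (u' := deriv f) (v := deriv g) (v' := deriv (deriv g)) (a := 0) (b := 2 * π)
    (fun x _ => (hfd x).hasDerivAt) (fun x _ => (hg'd x).hasDerivAt)
    (hf'c.intervalIntegrable _ _) (hg''c.intervalIntegrable _ _)
  have hb : f (2 * π) * deriv g (2 * π) - f 0 * deriv g 0 = 0 := by
    have h1 : f (2 * π) = f 0 := by have := hfp 0; rwa [zero_add] at this
    have h2 : deriv g (2 * π) = deriv g 0 := by
      have := (periodic_deriv_aux hgp) 0; rwa [zero_add] at this
    rw [h1, h2]; ring
  have hsplit : (∫ θ in (0:ℝ)..(2 * π), f θ * (deriv (deriv g) θ + g θ))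
      = (∫ θ in (0:ℝ)..(2 * π), f θ * deriv (deriv g) θ)
        + ∫ θ in (0:ℝ)..(2 * π), f θ * g θ := by
    rw [← intervalIntegral.integral_add (f := fun θ => f θ * deriv (deriv g) θ) (g := fun θ => f θ * g θ) ((hfc.mul hg''c).intervalIntegrable _ _)
      ((hfc.mul hgc).intervalIntegrable _ _)]
    exact intervalIntegral.integral_congr fun θ _ => by ring
  rw [hsplit, hparts, hb,
    intervalIntegral.integral_sub (f := fun θ => f θ * g θ) (g := fun θ => deriv f θ * deriv g θ) ((hfc.mul hgc).intervalIntegrable _ _)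
      ((hf'c.mul hg'c).intervalIntegrable _ _)]
  ring

/-- Planar Minkowski mixed-volume inequality `V(h,h)·V(s,s) ≤ V(h,s)²`, where
`V(f,g) = (1/2)∫₀^{2π} f (g''+g) dθ`, for `s` a smooth support function with
`s''+s > 0` (enclosing positive area) and `h` an arbitrary smooth `2π`-periodic
function. -/
theorem planar_minkowski_mixed_volume_inequality
    (s h : ℝ → ℝ) (hs : ContDiff ℝ (⊤ : ℕ∞) s) (hh : ContDiff ℝ (⊤ : ℕ∞) h)
    (hsper : Function.Periodic s (2 * π)) (hhper : Function.Periodic h (2 * π))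
    (hconv : ∀ θ, 0 < deriv (deriv s) θ + s θ)
    (hA : 0 < (1 / 2) * ∫ θ in (0 : ℝ)..(2 * π), s θ * (deriv (deriv s) θ + s θ)) :
    ((1 / 2) * ∫ θ in (0 : ℝ)..(2 * π), h θ * (deriv (deriv h) θ + h θ)) *
      ((1 / 2) * ∫ θ in (0 : ℝ)..(2 * π), s θ * (deriv (deriv s) θ + s θ))
      ≤ ((1 / 2) * ∫ θ in (0 : ℝ)..(2 * π), h θ * (deriv (deriv s) θ + s θ)) ^ 2 := by
  have h2π := Real.two_pi_pos
  have hhc : Continuous h := hh.continuous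
  have hsc : Continuous s := hs.continuous
  have hhd : Differentiable ℝ h := hh.differentiable (by simp)
  have hsd : Differentiable ℝ s := hs.differentiable (by simp)
  have hh'c : Continuous (deriv h) := hh.continuous_deriv (by simp)
  have hs'c : Continuous (deriv s) := hs.continuous_deriv (by simp)
  have hs' : ContDiff ℝ ∞ (deriv s) := (contDiff_infty_iff_deriv.mp (hs.of_le (by simp))).2
  have hs''c : Continuous (deriv (deriv s)) := hs'.continuous_deriv (by exact_mod_cast le_top)
  have ehh := ibp_aux hh hh hhper hhper
  have ess := ibp_aux hs hs hsper hsper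
  have ehs := ibp_aux hh hs hhper hsper
  rw [ehh, ess, ehs]
  rw [ess] at hA
  set Ihh := ∫ θ in (0:ℝ)..(2 * π), (h θ * h θ - deriv h θ * deriv h θ) with hIhh
  set Iss := ∫ θ in (0:ℝ)..(2 * π), (s θ * s θ - deriv s θ * deriv s θ) with hIss
  set Ihs := ∫ θ in (0:ℝ)..(2 * π), (h θ * s θ - deriv h θ * deriv s θ) with hIhs
  -- ∫ s > 0
  have hsint : (∫ θ in (0:ℝ)..(2 * π), (deriv (deriv s) θ + s θ))
      = ∫ θ in (0:ℝ)..(2 * π), s θ := by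
    rw [intervalIntegral.integral_add (hs''c.intervalIntegrable _ _)
      (hsc.intervalIntegrable _ _)]
    have hds : (∫ θ in (0:ℝ)..(2 * π), deriv (deriv s) θ) = deriv s (2 * π) - deriv s 0 :=
      intervalIntegral.integral_deriv_eq_sub (fun x _ => hs'.differentiable (by simp) x)
        (hs''c.intervalIntegrable _ _)
    have hper' : deriv s (2 * π) = deriv s 0 := by
      have := (periodic_deriv_aux hsper) 0; rwa [zero_add] at this
    rw [hds, hper', sub_self, zero_add]
  have hspos : 0 < ∫ θ in (0:ℝ)..(2 * π), s θ := by
    rw [← hsint]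
    exact intervalIntegral.intervalIntegral_pos_of_pos_on
      ((hs''c.add hsc).intervalIntegrable _ _) (fun x _ => hconv x) h2π
  set μ := (∫ θ in (0:ℝ)..(2 * π), h θ) / (∫ θ in (0:ℝ)..(2 * π), s θ) with hμ
  set g : ℝ → ℝ := fun θ => h θ - μ * s θ with hg
  have hgcd : ContDiff ℝ (⊤ : ℕ∞) g := hh.sub (contDiff_const.mul hs)
  have hgper : Function.Periodic g (2 * π) := fun x => by
    simp only [hg, hhper x, hsper x]
  have hgzero : (∫ θ in (0:ℝ)..(2 * π), g θ) = 0 := by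
    simp only [hg]
    rw [intervalIntegral.integral_sub (f := h) (g := fun θ => μ * s θ) (hhc.intervalIntegrable _ _)
      ((continuous_const.mul hsc).intervalIntegrable _ _),
      intervalIntegral.integral_const_mul, hμ]
    field_simp
    simp
  have hgderiv : deriv g = fun θ => deriv h θ - μ * deriv s θ := by
    funext θ
    exact (((hhd θ).hasDerivAt).sub (((hsd θ).hasDerivAt).const_mul μ)).deriv
  have hg'c : Continuous (deriv g) := by
    rw [hgderiv]; exact hh'c.sub (continuous_const.mul hs'c)
  have hW := wirtinger_aux hgcd hgper hgzero
  have hWgg : (∫ θ in (0:ℝ)..(2 * π), (g θ * g θ - deriv g θ * deriv g θ)) ≤ 0 := by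
    rw [intervalIntegral.integral_sub (f := fun θ => g θ * g θ) (g := fun θ => deriv g θ * deriv g θ) ((hgcd.continuous.mul hgcd.continuous).intervalIntegrable _ _)
      ((hg'c.mul hg'c).intervalIntegrable _ _)]
    have e1 : (∫ θ in (0:ℝ)..(2 * π), g θ * g θ) = ∫ θ in (0:ℝ)..(2 * π), g θ ^ 2 :=
      intervalIntegral.integral_congr fun θ _ => (sq (g θ)).symm ▸ by ring
    have e2 : (∫ θ in (0:ℝ)..(2 * π), deriv g θ * deriv g θ)
        = ∫ θ in (0:ℝ)..(2 * π), deriv g θ ^ 2 :=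
      intervalIntegral.integral_congr fun θ _ => by ring
    rw [e1, e2]; linarith
  have hexpand : (∫ θ in (0:ℝ)..(2 * π), (g θ * g θ - deriv g θ * deriv g θ))
      = Ihh - (2 * μ) * Ihs + μ ^ 2 * Iss := by
    have e : ∀ θ ∈ Set.uIcc (0:ℝ) (2 * π), g θ * g θ - deriv g θ * deriv g θ
        = (h θ * h θ - deriv h θ * deriv h θ)
          - (2 * μ) * (h θ * s θ - deriv h θ * deriv s θ)
          + μ ^ 2 * (s θ * s θ - deriv s θ * deriv s θ) := by
      intro θ _
      rw [hgderiv]; simp only [hg]; ring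
    rw [intervalIntegral.integral_congr e]
    have iA : IntervalIntegrable (fun θ => h θ * h θ - deriv h θ * deriv h θ) volume 0 (2 * π) :=
      ((hhc.mul hhc).sub (hh'c.mul hh'c)).intervalIntegrable _ _
    have iB : IntervalIntegrable (fun θ => h θ * s θ - deriv h θ * deriv s θ) volume 0 (2 * π) :=
      ((hhc.mul hsc).sub (hh'c.mul hs'c)).intervalIntegrable _ _
    have iC : IntervalIntegrable (fun θ => s θ * s θ - deriv s θ * deriv s θ) volume 0 (2 * π) :=
      ((hsc.mul hsc).sub (hs'c.mul hs'c)).intervalIntegrable _ _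
    rw [intervalIntegral.integral_add ((iA.sub (iB.const_mul _))) (iC.const_mul _),
      intervalIntegral.integral_sub iA (iB.const_mul _),
      intervalIntegral.integral_const_mul, intervalIntegral.integral_const_mul]
  have key : Ihh - (2 * μ) * Ihs + μ ^ 2 * Iss ≤ 0 := by rw [← hexpand]; exact hWgg
  have hIsspos : 0 < Iss := by linarith
  nlinarith [sq_nonneg (Ihs - μ * Iss), mul_le_mul_of_nonneg_right key hIsspos.le,
    sq_nonneg (Ihs + μ * Iss)]
end

section
/- Equality holds in the planar mixed-area Minkowski inequality V(h,h)·V(s,s) = V(h,s)² (with s'' + s > 0 and V(s,s) > 0) if and only if there exist constants c ∈ ℝ and a vector d = (d₁,d₂) ∈ ℝ² such that h(θ) = c·s(θ) + d₁cos θ + d₂ sin θ. -/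
open Real intervalIntegral

namespace PlanarMink

noncomputable section

open MeasureTheory Function Set Complex AddCircle

lemma hdv {f : ℝ → ℝ} (hf : ContDiff ℝ (⊤ : ℕ∞) f) (x : ℝ) : HasDerivAt f (deriv f x) x :=
  ((hf.differentiable (by simp)) x).hasDerivAt

lemma cdd {f : ℝ → ℝ} (hf : ContDiff ℝ (⊤ : ℕ∞) f) : ContDiff ℝ (⊤ : ℕ∞) (deriv f) :=
  (contDiff_succ_iff_deriv.mp (hf.of_le (by simp))).2.2

lemma per_deriv {f : ℝ → ℝ} (hp : Function.Periodic f (2 * π)) :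
    Function.Periodic (deriv f) (2 * π) := by
  intro x
  rw [← deriv_comp_add_const]
  simp only [hp _]

lemma per_endpoint {f : ℝ → ℝ} (hp : Function.Periodic f (2 * π)) : f (2 * π) = f 0 := by
  simpa using hp 0

lemma ii {f : ℝ → ℝ} (hf : Continuous f) : IntervalIntegrable f volume 0 (2 * π) :=
  hf.intervalIntegrable _ _

/-- Integration by parts: `∫ f g'' = - ∫ f' g'` for smooth periodic `f, g`. -/
lemma ibp_core {f g : ℝ → ℝ} (hf : ContDiff ℝ (⊤ : ℕ∞) f) (hg : ContDiff ℝ (⊤ : ℕ∞) g)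
    (hfp : Function.Periodic f (2 * π)) (hgp : Function.Periodic g (2 * π)) :
    ∫ θ in (0:ℝ)..(2 * π), f θ * deriv (deriv g) θ
      = - ∫ θ in (0:ℝ)..(2 * π), deriv f θ * deriv g θ := by
  have h := intervalIntegral.integral_mul_deriv_eq_deriv_mul
    (u := f) (u' := deriv f) (v := deriv g) (v' := deriv (deriv g))
    (fun x _ => hdv hf x) (fun x _ => hdv (cdd hg) x)
    (ii (cdd hf).continuous) (ii (cdd (cdd hg)).continuous)
  rw [h, per_endpoint hfp, per_endpoint (per_deriv hgp)]
  ring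

/-- `V`-type integral equals the first-order bilinear form. -/
lemma ibp {f g : ℝ → ℝ} (hf : ContDiff ℝ (⊤ : ℕ∞) f) (hg : ContDiff ℝ (⊤ : ℕ∞) g)
    (hfp : Function.Periodic f (2 * π)) (hgp : Function.Periodic g (2 * π)) :
    ∫ θ in (0:ℝ)..(2 * π), f θ * (deriv (deriv g) θ + g θ)
      = ∫ θ in (0:ℝ)..(2 * π), (f θ * g θ - deriv f θ * deriv g θ) := by
  have h1 : ∫ θ in (0:ℝ)..(2 * π), f θ * (deriv (deriv g) θ + g θ)
      = (∫ θ in (0:ℝ)..(2 * π), f θ * deriv (deriv g) θ)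
        + ∫ θ in (0:ℝ)..(2 * π), f θ * g θ := by
    rw [← intervalIntegral.integral_add
      (ii (hf.continuous.fun_mul (cdd (cdd hg)).continuous))
      (ii (hf.continuous.fun_mul hg.continuous))]
    congr 1; ext θ; ring
  rw [h1, ibp_core hf hg hfp hgp, intervalIntegral.integral_sub
      (ii (hf.continuous.fun_mul hg.continuous))
      (ii ((cdd hf).continuous.fun_mul (cdd hg).continuous))]
  ring

instance factPi : Fact (0 < 2 * π) := ⟨Real.two_pi_pos⟩

/-- Continuity of the periodic lift. -/
lemma lift_continuous {f : ℝ → ℂ} (hc : Continuous f) (hp : Function.Periodic f (2 * π)) :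
    Continuous (hp.lift : AddCircle (2 * π) → ℂ) := by
  exact hc.quotient_liftOn' _

/-- coefficient formula -/
lemma coeff_formula {f : ℝ → ℂ} (hp : Function.Periodic f (2 * π)) (n : ℤ) :
    fourierCoeff (hp.lift : AddCircle (2 * π) → ℂ) n
      = (1 / (2 * π)) • ∫ x in (0:ℝ)..(2 * π), fourier (-n) (x : AddCircle (2 * π)) • f x := by
  rw [fourierCoeff_eq_intervalIntegral _ n 0]
  simp only [zero_add, Function.Periodic.lift_coe]

/-- Parseval -/
lemma parseval (F : C(AddCircle (2 * π), ℂ)) :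
    Summable (fun i : ℤ => ‖fourierCoeff (F : AddCircle (2 * π) → ℂ) i‖ ^ 2) ∧
      (2 * π) * ∑' i : ℤ, ‖fourierCoeff (F : AddCircle (2 * π) → ℂ) i‖ ^ 2
        = ∫ x in (0:ℝ)..(2 * π), ‖F (x : AddCircle (2 * π))‖ ^ 2 := by
  set fl := ContinuousMap.toLp (E := ℂ) 2 haarAddCircle ℂ F with hfl
  have P := tsum_sq_fourierCoeff fl
  have hcoeff : ∀ n, fourierCoeff (fl : AddCircle (2 * π) → ℂ) n
      = fourierCoeff (F : AddCircle (2 * π) → ℂ) n := fun n => fourierCoeff_toLp F n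
  have hS : Summable fun i : ℤ => ‖fourierCoeff (F : AddCircle (2 * π) → ℂ) i‖ ^ 2 := by
    have S0 : Summable fun i : ℤ => ‖fourierBasis.repr fl i‖ ^ ((2 : ENNReal).toReal) :=
      (lp.memℓp (fourierBasis.repr fl)).summable (by norm_num)
    have he : (fun i : ℤ => ‖fourierBasis.repr fl i‖ ^ ((2 : ENNReal).toReal))
        = fun i : ℤ => ‖fourierCoeff (F : AddCircle (2 * π) → ℂ) i‖ ^ 2 := by
      funext i
      rw [fourierBasis_repr, hcoeff i]
      norm_num
    rwa [he] at S0
  refine ⟨hS, ?_⟩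
  have e1 : ∑' i : ℤ, ‖fourierCoeff (F : AddCircle (2 * π) → ℂ) i‖ ^ 2
      = ∫ t : AddCircle (2 * π), ‖fl t‖ ^ 2 ∂haarAddCircle := by
    rw [← P]
    congr 1
    funext i
    rw [hcoeff i]
  have e2 : ∫ t : AddCircle (2 * π), ‖fl t‖ ^ 2 ∂haarAddCircle
      = ∫ t : AddCircle (2 * π), ‖F t‖ ^ 2 ∂haarAddCircle := by
    apply MeasureTheory.integral_congr_ae
    filter_upwards [ContinuousMap.coeFn_toLp (𝕜 := ℂ) (p := 2) haarAddCircle F] with t ht using by rw [ht]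
  have e3 : (∫ x in (0:ℝ)..(2 * π), ‖F (x : AddCircle (2 * π))‖ ^ 2)
      = ∫ t : AddCircle (2 * π), ‖F t‖ ^ 2 ∂(volume) := by
    rw [← AddCircle.intervalIntegral_preimage (2 * π) 0 (fun t => ‖F t‖ ^ 2)]
    simp only [zero_add]
  have e4 : (∫ t : AddCircle (2 * π), ‖F t‖ ^ 2 ∂(volume))
      = (2 * π) * ∫ t : AddCircle (2 * π), ‖F t‖ ^ 2 ∂haarAddCircle := by
    rw [volume_eq_smul_haarAddCircle, MeasureTheory.integral_smul_measure, ENNReal.toReal_ofReal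
      Real.two_pi_pos.le, smul_eq_mul]
  rw [e1, e2, e3, e4]

lemma two_pi_I_ne : ((2 * π : ℝ) : ℂ) ≠ 0 := by
  simp [Real.pi_ne_zero]

/-- coefficient of the derivative -/
lemma coeff_deriv {g : ℝ → ℝ} (hg : ContDiff ℝ (⊤ : ℕ∞) g) (hgp : Function.Periodic g (2 * π))
    (hgcper : Function.Periodic (fun x : ℝ => ((g x : ℝ) : ℂ)) (2 * π))
    (hgc'per : Function.Periodic (fun x : ℝ => ((deriv g x : ℝ) : ℂ)) (2 * π)) (n : ℤ) :
    fourierCoeff (hgc'per.lift : AddCircle (2 * π) → ℂ) n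
      = (Complex.I * n) * fourierCoeff (hgcper.lift : AddCircle (2 * π) → ℂ) n := by
  rw [coeff_formula hgc'per n, coeff_formula hgcper n]
  have key := intervalIntegral.integral_mul_deriv_eq_deriv_mul
    (a := (0:ℝ)) (b := 2 * π)
    (u := fun y : ℝ => (fourier (-n) (y : AddCircle (2 * π)) : ℂ))
    (u' := fun y : ℝ => -2 * (π : ℂ) * Complex.I * n / ((2 * π : ℝ) : ℂ)
      * fourier (-n) (y : AddCircle (2 * π)))
    (v := fun y : ℝ => ((g y : ℝ) : ℂ)) (v' := fun y : ℝ => ((deriv g y : ℝ) : ℂ))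
    (fun x _ => hasDerivAt_fourier_neg (2 * π) n x)
    (fun x _ => (hdv hg x).ofReal_comp)
    ((continuous_const.mul ((map_continuous (fourier (-n))).comp
      (AddCircle.continuous_mk' _))).intervalIntegrable _ _)
    ((Complex.continuous_ofReal.comp (cdd hg).continuous).intervalIntegrable _ _)
  have hb : ((2 * π : ℝ) : AddCircle (2 * π)) = ((0 : ℝ) : AddCircle (2 * π)) := by
    rw [AddCircle.coe_period]
    norm_cast
  have hb2 : ((g (2 * π) : ℝ) : ℂ) = ((g 0 : ℝ) : ℂ) := by rw [per_endpoint hgp]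
  beta_reduce at key
  rw [hb, hb2] at key
  simp only [smul_eq_mul]
  rw [key]
  have e : (∫ x in (0:ℝ)..(2 * π), -2 * (π : ℂ) * Complex.I * n / ((2 * π : ℝ) : ℂ)
        * (fourier (-n) (x : AddCircle (2 * π)) : ℂ) * ((g x : ℝ) : ℂ))
      = (-2 * (π : ℂ) * Complex.I * n / ((2 * π : ℝ) : ℂ))
        * ∫ x in (0:ℝ)..(2 * π), (fourier (-n) (x : AddCircle (2 * π)) : ℂ) * ((g x : ℝ) : ℂ) := by
    rw [← intervalIntegral.integral_const_mul]
    congr 1; ext x; ring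
  rw [e, Complex.real_smul, Complex.real_smul]
  have hC : -(-2 * (π : ℂ) * Complex.I * n / ((2 * π : ℝ) : ℂ)) = Complex.I * n := by
    rw [eq_comm, ← neg_eq_iff_eq_neg, eq_comm, div_eq_iff two_pi_I_ne]
    push_cast
    ring
  set Z : ℂ := ∫ x in (0:ℝ)..(2 * π), (fourier (-n) (x : AddCircle (2 * π)) : ℂ) * ((g x : ℝ) : ℂ)
    with hZ
  linear_combination (((1 / (2 * π) : ℝ)) : ℂ) * Z * hC

lemma wirtinger {g : ℝ → ℝ} (hg : ContDiff ℝ (⊤ : ℕ∞) g) (hgp : Function.Periodic g (2 * π))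
    (hmean : (∫ θ in (0:ℝ)..(2 * π), g θ) = 0) :
    (∫ θ in (0:ℝ)..(2 * π), (g θ * g θ - deriv g θ * deriv g θ)) ≤ 0 ∧
      ((∫ θ in (0:ℝ)..(2 * π), (g θ * g θ - deriv g θ * deriv g θ)) = 0 →
        ∃ a b : ℝ, ∀ θ, g θ = a * Real.cos θ + b * Real.sin θ) := by
  have hgcper : Function.Periodic (fun x : ℝ => ((g x : ℝ) : ℂ)) (2 * π) :=
    fun x => by simp [hgp x]
  have hgc'per : Function.Periodic (fun x : ℝ => ((deriv g x : ℝ) : ℂ)) (2 * π) :=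
    fun x => by simp [per_deriv hgp x]
  have hgccont : Continuous fun x : ℝ => ((g x : ℝ) : ℂ) :=
    Complex.continuous_ofReal.comp hg.continuous
  have hgc'cont : Continuous fun x : ℝ => ((deriv g x : ℝ) : ℂ) :=
    Complex.continuous_ofReal.comp (cdd hg).continuous
  obtain ⟨hS, hP⟩ := parseval ⟨hgcper.lift, lift_continuous hgccont hgcper⟩
  obtain ⟨hS', hP'⟩ := parseval ⟨hgc'per.lift, lift_continuous hgc'cont hgc'per⟩
  simp only [ContinuousMap.coe_mk, Function.Periodic.lift_coe] at hS hP hS' hP'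
  set c : ℤ → ℂ := fourierCoeff (hgcper.lift : AddCircle (2 * π) → ℂ) with hcdef
  set c' : ℤ → ℂ := fourierCoeff (hgc'per.lift : AddCircle (2 * π) → ℂ) with hc'def
  have hnorm : ∀ x : ℝ, ‖((g x : ℝ) : ℂ)‖ ^ 2 = g x * g x := by
    intro x
    rw [Complex.norm_real, Real.norm_eq_abs, _root_.sq_abs, sq]
  have hnorm' : ∀ x : ℝ, ‖((deriv g x : ℝ) : ℂ)‖ ^ 2 = deriv g x * deriv g x := by
    intro x
    rw [Complex.norm_real, Real.norm_eq_abs, _root_.sq_abs, sq]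
  rw [intervalIntegral.integral_congr (fun x _ => hnorm x)] at hP
  rw [intervalIntegral.integral_congr (fun x _ => hnorm' x)] at hP'
  have hterm : ∀ n : ℤ, ‖c' n‖ ^ 2 = (n : ℝ) ^ 2 * ‖c n‖ ^ 2 := by
    intro n
    rw [hc'def, hcdef]
    rw [coeff_deriv hg hgp hgcper hgc'per n]
    rw [norm_mul, norm_mul, Complex.norm_I, one_mul, mul_pow]
    congr 1
    rw [Complex.norm_intCast]
    push_cast
    rw [_root_.sq_abs]
  have hc0 : c 0 = 0 := by
    rw [hcdef]
    rw [coeff_formula hgcper 0]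
    simp only [neg_zero, fourier_zero, one_smul]
    rw [intervalIntegral.integral_ofReal, hmean]
    simp
  set D : ℤ → ℝ := fun n => ‖c' n‖ ^ 2 - ‖c n‖ ^ 2 with hDdef
  have hDsum : Summable D := hS'.sub hS
  have hDnn : ∀ n, 0 ≤ D n := by
    intro n
    by_cases h0 : n = 0
    · subst h0
      simp [hDdef, hterm 0, hc0]
    · have hb1 : (1 : ℤ) ≤ |n| := Int.one_le_abs h0
      have hb1' : (1 : ℝ) ≤ |(n : ℝ)| := by
        rw [← Int.cast_abs]
        exact_mod_cast hb1
      have h1 : (1 : ℝ) ≤ (n : ℝ) ^ 2 := by nlinarith [abs_nonneg (n : ℝ), _root_.sq_abs (n : ℝ)]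
      have ht := hterm n
      simp only [hDdef]
      nlinarith [sq_nonneg ‖c n‖]
  have hQ : (∫ θ in (0:ℝ)..(2 * π), (g θ * g θ - deriv g θ * deriv g θ))
      = -(2 * π) * ∑' n, D n := by
    rw [intervalIntegral.integral_sub (ii (hg.continuous.fun_mul hg.continuous))
      (ii ((cdd hg).continuous.fun_mul (cdd hg).continuous)), ← hP, ← hP']
    rw [hDdef, Summable.tsum_sub hS' hS]
    ring
  have htsum_nn : 0 ≤ ∑' n, D n := tsum_nonneg hDnn
  constructor
  · rw [hQ]
    nlinarith [Real.two_pi_pos]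
  · intro h0
    rw [hQ] at h0
    have ht0 : ∑' n, D n = 0 := by
      rcases mul_eq_zero.mp h0 with h | h
      · nlinarith [Real.two_pi_pos]
      · exact h
    have hDzero : ∀ n, D n = 0 := by
      intro n
      have h1 : D n ≤ ∑' m, D m := Summable.le_tsum hDsum n (fun m _ => hDnn m)
      have h2 := hDnn n
      linarith [ht0 ▸ h1]
    have hvanish : ∀ b ∉ ({-1, 1} : Finset ℤ), c b = 0 := by
      intro b hb
      simp only [Finset.mem_insert, Finset.mem_singleton] at hb
      push_neg at hb
      by_cases hb0 : b = 0
      · subst hb0; exact hc0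
      · have h2 : (2 : ℤ) ≤ |b| := by
          rcases le_or_gt 0 b with hle | hlt
          · rw [abs_of_nonneg hle]; omega
          · rw [abs_of_neg hlt]; omega
        have h2' : (2 : ℝ) ≤ |(b : ℝ)| := by
          rw [← Int.cast_abs]
          exact_mod_cast h2
        have h4 : (4 : ℝ) ≤ (b : ℝ) ^ 2 := by nlinarith [abs_nonneg (b:ℝ), _root_.sq_abs (b:ℝ)]
        have hD := hDzero b
        have ht := hterm b
        simp only [hDdef] at hD
        have hn2 : ‖c b‖ ^ 2 = 0 := by nlinarith [sq_nonneg ‖c b‖]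
        have hn1 : ‖c b‖ = 0 := by nlinarith [norm_nonneg (c b)]
        exact norm_eq_zero.mp hn1
    have hsummc : Summable c := summable_of_ne_finset_zero hvanish
    refine ⟨(c 1).re + (c (-1)).re, (c (-1)).im - (c 1).im, fun θ => ?_⟩
    have hps := has_pointwise_sum_fourier_series_of_summable
      (f := ⟨hgcper.lift, lift_continuous hgccont hgcper⟩)
      (by simpa only [ContinuousMap.coe_mk, ← hcdef] using hsummc) (θ : AddCircle (2 * π))
    have hfin : HasSum (fun i : ℤ => c i • (fourier i (θ : AddCircle (2 * π)) : ℂ))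
        (∑ i ∈ ({-1, 1} : Finset ℤ), c i • (fourier i (θ : AddCircle (2 * π)) : ℂ)) :=
      hasSum_sum_of_ne_finset_zero (fun b hb => by rw [hvanish b hb, zero_smul])
    have heq : ((g θ : ℝ) : ℂ)
        = ∑ i ∈ ({-1, 1} : Finset ℤ), c i • (fourier i (θ : AddCircle (2 * π)) : ℂ) := by
      have hps' : HasSum (fun i : ℤ => c i • (fourier i (θ : AddCircle (2 * π)) : ℂ))
          ((g θ : ℝ) : ℂ) := by
        simpa only [ContinuousMap.coe_mk, Function.Periodic.lift_coe, ← hcdef] using hps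
      exact hps'.unique hfin
    rw [Finset.sum_pair (by decide : (-1 : ℤ) ≠ 1)] at heq
    have hf1 : (fourier (1 : ℤ) (θ : AddCircle (2 * π)) : ℂ) = Complex.exp (θ * Complex.I) := by
      rw [fourier_coe_apply]
      congr 1
      rw [div_eq_iff two_pi_I_ne]
      push_cast
      ring
    have hfm1 : (fourier (-1 : ℤ) (θ : AddCircle (2 * π)) : ℂ)
        = Complex.exp (-(θ : ℂ) * Complex.I) := by
      rw [fourier_coe_apply]
      congr 1
      rw [div_eq_iff two_pi_I_ne]
      push_cast
      ring
    rw [hf1, hfm1, Complex.exp_mul_I, Complex.exp_mul_I] at heq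
    rw [Complex.cos_neg, Complex.sin_neg, ← Complex.ofReal_cos, ← Complex.ofReal_sin] at heq
    have hre := congrArg Complex.re heq
    simp only [Complex.ofReal_re, Complex.add_re, Complex.mul_re, Complex.sub_re,
      Complex.neg_re, Complex.ofReal_im, Complex.mul_im, Complex.I_re, Complex.I_im,
      Complex.add_im, Complex.sub_im, Complex.neg_im, smul_eq_mul] at hre
    rw [hre]
    ring

/-- integral of a second derivative of a smooth periodic function vanishes. -/
lemma integral_deriv2 {s : ℝ → ℝ} (hs : ContDiff ℝ (⊤ : ℕ∞) s) (hsp : Function.Periodic s (2 * π)) :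
    (∫ θ in (0:ℝ)..(2 * π), deriv (deriv s) θ) = 0 := by
  rw [intervalIntegral.integral_deriv_eq_sub (fun x _ => ((cdd hs).differentiable (by simp)) x)
    (ii (cdd (cdd hs)).continuous)]
  rw [per_endpoint (per_deriv hsp)]
  ring

lemma claimA {s f : ℝ → ℝ} (hs : ContDiff ℝ (⊤ : ℕ∞) s) (hf : ContDiff ℝ (⊤ : ℕ∞) f)
    (hsp : Function.Periodic s (2 * π)) (hfp : Function.Periodic f (2 * π))
    (hconv : ∀ θ, 0 < deriv (deriv s) θ + s θ)
    (hQs : 0 < ∫ θ in (0:ℝ)..(2 * π), (s θ * s θ - deriv s θ * deriv s θ))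
    (horth : (∫ θ in (0:ℝ)..(2 * π), (f θ * s θ - deriv f θ * deriv s θ)) = 0) :
    (∫ θ in (0:ℝ)..(2 * π), (f θ * f θ - deriv f θ * deriv f θ)) ≤ 0 ∧
      ((∫ θ in (0:ℝ)..(2 * π), (f θ * f θ - deriv f θ * deriv f θ)) = 0 →
        ∃ a b : ℝ, ∀ θ, f θ = a * Real.cos θ + b * Real.sin θ) := by
  set m : ℝ := ∫ θ in (0:ℝ)..(2 * π), f θ with hm
  by_cases hm0 : m = 0
  · exact wirtinger hf hfp hm0
  · -- mean of s is positive
    have hms : 0 < ∫ θ in (0:ℝ)..(2 * π), s θ := by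
      have h2 : (∫ θ in (0:ℝ)..(2 * π), (deriv (deriv s) θ + s θ))
          = ∫ θ in (0:ℝ)..(2 * π), s θ := by
        rw [intervalIntegral.integral_add (ii (cdd (cdd hs)).continuous) (ii hs.continuous),
          integral_deriv2 hs hsp, zero_add]
      rw [← h2]
      apply intervalIntegral.intervalIntegral_pos_of_pos_on
        (ii ((cdd (cdd hs)).continuous.add hs.continuous))
        (fun x _ => hconv x) Real.two_pi_pos
    set ms : ℝ := ∫ θ in (0:ℝ)..(2 * π), s θ with hms'
    set t : ℝ := -ms / m with ht
    have htne : t ≠ 0 := by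
      apply div_ne_zero _ hm0
      simpa using hms.ne'
    set u : ℝ → ℝ := fun θ => s θ + t * f θ with hu
    have hu_smooth : ContDiff ℝ (⊤ : ℕ∞) u := hs.add (contDiff_const.mul hf)
    have hu_per : Function.Periodic u (2 * π) := fun x => by simp [hu, hsp x, hfp x]
    have hu_deriv : deriv u = fun θ => deriv s θ + t * deriv f θ := by
      funext x
      exact ((hdv hs x).add ((hdv hf x).const_mul t)).deriv
    have hu_mean : (∫ θ in (0:ℝ)..(2 * π), u θ) = 0 := by
      rw [hu]
      rw [intervalIntegral.integral_add (ii hs.continuous)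
        (ii (continuous_const.fun_mul hf.continuous)),
        intervalIntegral.integral_const_mul]
      rw [← hms', ← hm, ht]
      field_simp; ring
    have hW := (wirtinger hu_smooth hu_per hu_mean).1
    -- expand Q(u)
    have hsymm : (∫ θ in (0:ℝ)..(2 * π), (s θ * f θ - deriv s θ * deriv f θ)) = 0 := by
      rw [← horth]
      congr 1; ext θ; ring
    have hQu : (∫ θ in (0:ℝ)..(2 * π), (u θ * u θ - deriv u θ * deriv u θ))
        = (∫ θ in (0:ℝ)..(2 * π), (s θ * s θ - deriv s θ * deriv s θ))
          + (2 * t) * (∫ θ in (0:ℝ)..(2 * π), (s θ * f θ - deriv s θ * deriv f θ))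
          + t ^ 2 * (∫ θ in (0:ℝ)..(2 * π), (f θ * f θ - deriv f θ * deriv f θ)) := by
      rw [← intervalIntegral.integral_const_mul, ← intervalIntegral.integral_const_mul,
        ← intervalIntegral.integral_add
          (ii ((hs.continuous.fun_mul hs.continuous).fun_sub
            ((cdd hs).continuous.fun_mul (cdd hs).continuous)))
          (ii (continuous_const.fun_mul ((hs.continuous.fun_mul hf.continuous).fun_sub
            ((cdd hs).continuous.fun_mul (cdd hf).continuous)))),
        ← intervalIntegral.integral_add
          (IntervalIntegrable.add
            (ii ((hs.continuous.fun_mul hs.continuous).fun_sub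
              ((cdd hs).continuous.fun_mul (cdd hs).continuous)))
            (ii (continuous_const.fun_mul ((hs.continuous.fun_mul hf.continuous).fun_sub
              ((cdd hs).continuous.fun_mul (cdd hf).continuous)))))
          (ii (continuous_const.fun_mul ((hf.continuous.fun_mul hf.continuous).fun_sub
            ((cdd hf).continuous.fun_mul (cdd hf).continuous))))]
      congr 1; ext θ
      rw [hu_deriv]; simp only [hu]
      ring
    rw [hQu, hsymm, mul_zero, add_zero] at hW
    have hQf : (∫ θ in (0:ℝ)..(2 * π), (f θ * f θ - deriv f θ * deriv f θ)) < 0 := by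
      nlinarith [sq_pos_of_ne_zero htne, sq_nonneg t]
    exact ⟨hQf.le, fun h => absurd h hQf.ne⟩


lemma cos_smooth : ContDiff ℝ (⊤ : ℕ∞) Real.cos := Real.contDiff_cos
lemma sin_smooth : ContDiff ℝ (⊤ : ℕ∞) Real.sin := Real.contDiff_sin

lemma cos2 : deriv (deriv Real.cos) = fun x => -Real.cos x := by
  funext x
  rw [Real.deriv_cos']
  exact ((Real.hasDerivAt_sin x).neg).deriv

lemma sin2 : deriv (deriv Real.sin) = fun x => -Real.sin x := by
  funext x
  rw [Real.deriv_sin]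
  exact (Real.hasDerivAt_cos x).deriv

/-- `∫ cos (s''+s) = 0` for smooth periodic `s`. -/
lemma cos_orth {s : ℝ → ℝ} (hs : ContDiff ℝ (⊤ : ℕ∞) s) (hsp : Function.Periodic s (2 * π)) :
    (∫ θ in (0:ℝ)..(2 * π), Real.cos θ * (deriv (deriv s) θ + s θ)) = 0 := by
  rw [ibp cos_smooth hs Real.cos_periodic hsp]
  have h2 : (∫ θ in (0:ℝ)..(2 * π), (s θ * Real.cos θ - deriv s θ * deriv Real.cos θ))
      = ∫ θ in (0:ℝ)..(2 * π), s θ * (deriv (deriv Real.cos) θ + Real.cos θ) :=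
    (ibp hs cos_smooth hsp Real.cos_periodic).symm
  have h3 : (∫ θ in (0:ℝ)..(2 * π), (Real.cos θ * s θ - deriv Real.cos θ * deriv s θ))
      = ∫ θ in (0:ℝ)..(2 * π), (s θ * Real.cos θ - deriv s θ * deriv Real.cos θ) := by
    congr 1; ext θ; ring
  rw [h3, h2]
  have h4 : ∀ θ, s θ * (deriv (deriv Real.cos) θ + Real.cos θ) = 0 := by
    intro θ; rw [cos2]; simp
  simp only [h4, intervalIntegral.integral_zero]

/-- `∫ sin (s''+s) = 0` for smooth periodic `s`. -/
lemma sin_orth {s : ℝ → ℝ} (hs : ContDiff ℝ (⊤ : ℕ∞) s) (hsp : Function.Periodic s (2 * π)) :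
    (∫ θ in (0:ℝ)..(2 * π), Real.sin θ * (deriv (deriv s) θ + s θ)) = 0 := by
  rw [ibp sin_smooth hs Real.sin_periodic hsp]
  have h2 : (∫ θ in (0:ℝ)..(2 * π), (s θ * Real.sin θ - deriv s θ * deriv Real.sin θ))
      = ∫ θ in (0:ℝ)..(2 * π), s θ * (deriv (deriv Real.sin) θ + Real.sin θ) :=
    (ibp hs sin_smooth hsp Real.sin_periodic).symm
  have h3 : (∫ θ in (0:ℝ)..(2 * π), (Real.sin θ * s θ - deriv Real.sin θ * deriv s θ))
      = ∫ θ in (0:ℝ)..(2 * π), (s θ * Real.sin θ - deriv s θ * deriv Real.sin θ) := by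
    congr 1; ext θ; ring
  rw [h3, h2]
  have h4 : ∀ θ, s θ * (deriv (deriv Real.sin) θ + Real.sin θ) = 0 := by
    intro θ; rw [sin2]; simp
  simp only [h4, intervalIntegral.integral_zero]

end

end PlanarMink


open PlanarMink


/-- Equality case in the planar mixed-area Minkowski inequality: with `s''+s>0`
and `V(s,s) > 0`, one has `V(h,h)·V(s,s) = V(h,s)²` if and only if
`h(θ) = c·s(θ) + d₁ cos θ + d₂ sin θ` for some constants `c, d₁, d₂`. -/
theorem planar_minkowski_equality_case
    (s h : ℝ → ℝ) (hs : ContDiff ℝ (⊤ : ℕ∞) s) (hh : ContDiff ℝ (⊤ : ℕ∞) h)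
    (hsper : Function.Periodic s (2 * π)) (hhper : Function.Periodic h (2 * π))
    (hconv : ∀ θ, 0 < deriv (deriv s) θ + s θ)
    (hVss : 0 < (1 / 2) * ∫ θ in (0 : ℝ)..(2 * π), s θ * (deriv (deriv s) θ + s θ)) :
    ((1 / 2) * ∫ θ in (0 : ℝ)..(2 * π), h θ * (deriv (deriv h) θ + h θ)) *
        ((1 / 2) * ∫ θ in (0 : ℝ)..(2 * π), s θ * (deriv (deriv s) θ + s θ))
      = ((1 / 2) * ∫ θ in (0 : ℝ)..(2 * π), h θ * (deriv (deriv s) θ + s θ)) ^ 2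
    ↔ ∃ (c d₁ d₂ : ℝ), ∀ θ, h θ = c * s θ + d₁ * cos θ + d₂ * sin θ := by
  constructor
  · -- forward direction
    intro heq
    rw [ibp hh hh hhper hhper, ibp hs hs hsper hsper, ibp hh hs hhper hsper] at heq
    have hQs : 0 < ∫ θ in (0:ℝ)..(2 * π), (s θ * s θ - deriv s θ * deriv s θ) := by
      rw [ibp hs hs hsper hsper] at hVss; linarith
    set A := ∫ θ in (0:ℝ)..(2 * π), (h θ * h θ - deriv h θ * deriv h θ) with hA
    set C := ∫ θ in (0:ℝ)..(2 * π), (s θ * s θ - deriv s θ * deriv s θ) with hC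
    set B := ∫ θ in (0:ℝ)..(2 * π), (h θ * s θ - deriv h θ * deriv s θ) with hB
    have hAC : A * C = B ^ 2 := by nlinarith [heq]
    set c : ℝ := B / C with hc
    set f : ℝ → ℝ := fun θ => h θ - c * s θ with hf
    have hfs : ContDiff ℝ (⊤ : ℕ∞) f := hh.sub (contDiff_const.mul hs)
    have hfp : Function.Periodic f (2 * π) := fun x => by simp [hf, hhper x, hsper x]
    have hfd : deriv f = fun θ => deriv h θ - c * deriv s θ := by
      funext x
      exact ((hdv hh x).sub ((hdv hs x).const_mul c)).deriv
    have horth : (∫ θ in (0:ℝ)..(2 * π), (f θ * s θ - deriv f θ * deriv s θ)) = 0 := by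
      have e1 : (∫ θ in (0:ℝ)..(2 * π), (f θ * s θ - deriv f θ * deriv s θ))
          = B - c * C := by
        rw [hB, hC, ← intervalIntegral.integral_const_mul,
          ← intervalIntegral.integral_sub
            (ii ((hh.continuous.fun_mul hs.continuous).fun_sub
              ((cdd hh).continuous.fun_mul (cdd hs).continuous)))
            (ii (continuous_const.fun_mul ((hs.continuous.fun_mul hs.continuous).fun_sub
              ((cdd hs).continuous.fun_mul (cdd hs).continuous))))]
        congr 1; ext θ
        rw [hfd]; simp only [hf]; ring
      rw [e1, hc]; field_simp; ring
    have hQf : (∫ θ in (0:ℝ)..(2 * π), (f θ * f θ - deriv f θ * deriv f θ)) = 0 := by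
      have e2 : (∫ θ in (0:ℝ)..(2 * π), (f θ * f θ - deriv f θ * deriv f θ))
          = A - (2 * c) * B + c ^ 2 * C := by
        rw [hA, hB, hC, ← intervalIntegral.integral_const_mul,
          ← intervalIntegral.integral_const_mul,
          ← intervalIntegral.integral_sub
            (ii ((hh.continuous.fun_mul hh.continuous).fun_sub
              ((cdd hh).continuous.fun_mul (cdd hh).continuous)))
            (ii (continuous_const.fun_mul ((hh.continuous.fun_mul hs.continuous).fun_sub
              ((cdd hh).continuous.fun_mul (cdd hs).continuous)))),
          ← intervalIntegral.integral_add
            (IntervalIntegrable.sub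
              (ii ((hh.continuous.fun_mul hh.continuous).fun_sub
                ((cdd hh).continuous.fun_mul (cdd hh).continuous)))
              (ii (continuous_const.fun_mul ((hh.continuous.fun_mul hs.continuous).fun_sub
                ((cdd hh).continuous.fun_mul (cdd hs).continuous)))))
            (ii (continuous_const.fun_mul ((hs.continuous.fun_mul hs.continuous).fun_sub
              ((cdd hs).continuous.fun_mul (cdd hs).continuous))))]
        congr 1; ext θ
        rw [hfd]; simp only [hf]; ring
      rw [e2, hc]
      field_simp
      nlinarith [hAC]
    obtain ⟨a, b, hab⟩ := (claimA hs hfs hsper hfp hconv hQs horth).2 hQf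
    refine ⟨c, a, b, fun θ => ?_⟩
    have := hab θ
    simp only [hf] at this
    linarith
  · -- reverse direction
    rintro ⟨c, d₁, d₂, hrep⟩
    have hfun : h = fun θ => c * s θ + d₁ * Real.cos θ + d₂ * Real.sin θ := funext hrep
    subst hfun
    set p : ℝ → ℝ := fun θ => c * s θ + d₁ * Real.cos θ + d₂ * Real.sin θ with hp
    have hp1 : deriv p = fun x => c * deriv s x + d₁ * -Real.sin x + d₂ * Real.cos x := by
      funext x
      exact ((((hdv hs x).const_mul c).add
        ((Real.hasDerivAt_cos x).const_mul d₁)).add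
        ((Real.hasDerivAt_sin x).const_mul d₂)).deriv
    have hp2 : ∀ x, deriv (deriv p) x = c * deriv (deriv s) x + d₁ * -Real.cos x
        + d₂ * -Real.sin x := by
      intro x
      rw [hp1]
      exact ((((hdv (cdd hs) x).const_mul c).add
        (((Real.hasDerivAt_sin x).neg).const_mul d₁)).add
        ((Real.hasDerivAt_cos x).const_mul d₂)).deriv
    have key : ∀ x, deriv (deriv p) x + p x = c * (deriv (deriv s) x + s x) := by
      intro x
      rw [hp2 x]
      simp only [hp]
      ring
    set X : ℝ → ℝ := fun θ => deriv (deriv s) θ + s θ with hX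
    have hXc : Continuous X := (cdd (cdd hs)).continuous.add hs.continuous
    have eB : (∫ θ in (0:ℝ)..(2 * π), p θ * X θ)
        = c * ∫ θ in (0:ℝ)..(2 * π), s θ * X θ := by
      have split : (∫ θ in (0:ℝ)..(2 * π), p θ * X θ)
          = c * (∫ θ in (0:ℝ)..(2 * π), s θ * X θ)
            + d₁ * (∫ θ in (0:ℝ)..(2 * π), Real.cos θ * X θ)
            + d₂ * (∫ θ in (0:ℝ)..(2 * π), Real.sin θ * X θ) := by
        rw [← intervalIntegral.integral_const_mul, ← intervalIntegral.integral_const_mul,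
          ← intervalIntegral.integral_const_mul,
          ← intervalIntegral.integral_add
            (ii (continuous_const.fun_mul (hs.continuous.fun_mul hXc)))
            (ii (continuous_const.fun_mul (Real.continuous_cos.fun_mul hXc))),
          ← intervalIntegral.integral_add
            (IntervalIntegrable.add
              (ii (continuous_const.fun_mul (hs.continuous.fun_mul hXc)))
              (ii (continuous_const.fun_mul (Real.continuous_cos.fun_mul hXc))))
            (ii (continuous_const.fun_mul (Real.continuous_sin.fun_mul hXc)))]
        congr 1; ext θ; simp only [hp]; ring
      rw [split, cos_orth hs hsper, sin_orth hs hsper]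
      ring
    have eA : (∫ θ in (0:ℝ)..(2 * π), p θ * (deriv (deriv p) θ + p θ))
        = c * ∫ θ in (0:ℝ)..(2 * π), p θ * X θ := by
      rw [← intervalIntegral.integral_const_mul]
      congr 1; ext θ
      rw [key θ]; ring
    calc (1 / 2 * ∫ θ in (0:ℝ)..(2 * π), p θ * (deriv (deriv p) θ + p θ)) *
        (1 / 2 * ∫ θ in (0:ℝ)..(2 * π), s θ * X θ)
        = (1 / 2 * (c * ∫ θ in (0:ℝ)..(2 * π), p θ * X θ)) *
          (1 / 2 * ∫ θ in (0:ℝ)..(2 * π), s θ * X θ) := by rw [eA]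
      _ = (1 / 2 * (c * (c * ∫ θ in (0:ℝ)..(2 * π), s θ * X θ))) *
          (1 / 2 * ∫ θ in (0:ℝ)..(2 * π), s θ * X θ) := by rw [eB]
      _ = (1 / 2 * (c * ∫ θ in (0:ℝ)..(2 * π), s θ * X θ)) ^ 2 := by ring
      _ = (1 / 2 * ∫ θ in (0:ℝ)..(2 * π), p θ * X θ) ^ 2 := by rw [eB]
end

section
/- For a smooth strictly convex planar body with support function s and any smooth 2π-periodic f, setting r = s''+s = 1/K, one has (1/r)(f''+f) = r^{-2/3} d/dθ( r^{-2/3} d/dθ (f r^{1/3}) ) + (f r^{1/3})·η, where η is the affine curvature expressed via r (this is the case n = 2 of the paper's Theorem 1). -/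
open Real
open scoped ContDiff

/-- Planar case (`n = 2`) of Theorem 1 of the paper: for a smooth strictly
convex planar body with support function `s`, radius of curvature
`r = s''+s = 1/K > 0`, affine arc-length derivative `D u = r^{-2/3} u'`, and
affine curvature `η = det[X_σσ, X_σσσ]`, every smooth `2π`-periodic `f`
satisfies `(f''+f)/r = D(D F̄) + F̄·η` where `F̄ = f/K^{1/3} = f·r^{1/3}`. -/
theorem affine_identity_planar
    (s : ℝ → ℝ) (hs : ContDiff ℝ (⊤ : ℕ∞) s) (hsper : Function.Periodic s (2 * π))
    (r : ℝ → ℝ) (hr : ∀ θ, r θ = deriv (deriv s) θ + s θ)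
    (hconv : ∀ θ, 0 < r θ)
    (x y : ℝ → ℝ)
    (hx : ∀ θ, x θ = s θ * cos θ - deriv s θ * sin θ)
    (hy : ∀ θ, y θ = s θ * sin θ + deriv s θ * cos θ)
    (D : (ℝ → ℝ) → (ℝ → ℝ)) (hD : ∀ u θ, D u θ = deriv u θ / (r θ) ^ ((2:ℝ)/3))
    (η : ℝ → ℝ)
    (hη : ∀ θ, η θ = D (D x) θ * D (D (D y)) θ - D (D y) θ * D (D (D x)) θ)
    (f : ℝ → ℝ) (hf : ContDiff ℝ (⊤ : ℕ∞) f) (hfper : Function.Periodic f (2 * π))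
    (Fbar : ℝ → ℝ) (hFbar : ∀ θ, Fbar θ = f θ * (r θ) ^ ((1:ℝ)/3)) :
    ∀ θ, (deriv (deriv f) θ + f θ) / r θ = D (D Fbar) θ + Fbar θ * η θ := by
  -- smoothness
  have hs2 : ContDiff ℝ ∞ s := hs.of_le (by simp)
  have hf2 : ContDiff ℝ ∞ f := hf.of_le (by simp)
  have hs' : ContDiff ℝ ∞ (deriv s) := (contDiff_infty_iff_deriv.mp hs2).2
  have hs'' : ContDiff ℝ ∞ (deriv (deriv s)) := (contDiff_infty_iff_deriv.mp hs').2
  have hf' : ContDiff ℝ ∞ (deriv f) := (contDiff_infty_iff_deriv.mp hf2).2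
  have hrfun : r = fun t => deriv (deriv s) t + s t := funext hr
  have hrc : ContDiff ℝ ∞ r := by rw [hrfun]; exact hs''.add hs2
  set p : ℝ → ℝ := fun t => (r t) ^ ((1:ℝ)/3) with hp_def
  have hpc : ContDiff ℝ ∞ p := by
    rw [contDiff_iff_contDiffAt]
    intro t
    exact (hrc.contDiffAt).rpow_const_of_ne (hconv t).ne'
  have hp' : ContDiff ℝ ∞ (deriv p) := (contDiff_infty_iff_deriv.mp hpc).2
  have hppos : ∀ t, 0 < p t := fun t => Real.rpow_pos_of_pos (hconv t) _
  have hpcube : ∀ t, p t ^ 3 = r t := by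
    intro t
    show ((r t) ^ ((1:ℝ)/3)) ^ (3:ℕ) = r t
    rw [← Real.rpow_natCast ((r t) ^ ((1:ℝ)/3)) 3, ← Real.rpow_mul (hconv t).le]
    norm_num
  have hr23 : ∀ t, (r t) ^ ((2:ℝ)/3) = p t ^ 2 := by
    intro t
    show (r t) ^ ((2:ℝ)/3) = ((r t) ^ ((1:ℝ)/3)) ^ (2:ℕ)
    rw [← Real.rpow_natCast ((r t) ^ ((1:ℝ)/3)) 2, ← Real.rpow_mul (hconv t).le]
    norm_num
  -- differentiability facts as HasDerivAt
  have hle : (∞ : WithTop ℕ∞) ≠ 0 := by simp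
  have hsd : ∀ t, HasDerivAt s (deriv s t) t := fun t => (hs2.differentiable hle t).hasDerivAt
  have hs'd : ∀ t, HasDerivAt (deriv s) (deriv (deriv s) t) t :=
    fun t => (hs'.differentiable hle t).hasDerivAt
  have hpd : ∀ t, HasDerivAt p (deriv p t) t := fun t => (hpc.differentiable hle t).hasDerivAt
  have hp'd : ∀ t, HasDerivAt (deriv p) (deriv (deriv p) t) t :=
    fun t => (hp'.differentiable hle t).hasDerivAt
  have hfd : ∀ t, HasDerivAt f (deriv f t) t := fun t => (hf2.differentiable hle t).hasDerivAt
  have hf'd : ∀ t, HasDerivAt (deriv f) (deriv (deriv f) t) t :=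
    fun t => (hf'.differentiable hle t).hasDerivAt
  -- derivative of x and y
  have hderx : ∀ t, HasDerivAt x (-(r t * sin t)) t := by
    intro t
    rw [funext hx]
    have h1 := ((hsd t).mul (hasDerivAt_cos t)).sub ((hs'd t).mul (hasDerivAt_sin t))
    exact h1.congr_deriv (by rw [hr t]; ring)
  have hdery : ∀ t, HasDerivAt y (r t * cos t) t := by
    intro t
    rw [funext hy]
    have h1 := ((hsd t).mul (hasDerivAt_sin t)).add ((hs'd t).mul (hasDerivAt_cos t))
    exact h1.congr_deriv (by rw [hr t]; ring)
  -- D x, D y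
  have hDx : D x = fun t => -(p t * sin t) := by
    funext t
    rw [hD, (hderx t).deriv, hr23, ← hpcube t]
    have h0 := (hppos t).ne'
    field_simp
    try ring
  have hDy : D y = fun t => p t * cos t := by
    funext t
    rw [hD, (hdery t).deriv, hr23, ← hpcube t]
    have h0 := (hppos t).ne'
    field_simp
    try ring
  -- D (D x), D (D y)
  have hderDx : ∀ t, HasDerivAt (D x) (-(deriv p t * sin t + p t * cos t)) t := by
    intro t
    rw [hDx]
    have h1 := ((hpd t).mul (hasDerivAt_sin t)).neg
    exact h1
  have hderDy : ∀ t, HasDerivAt (D y) (deriv p t * cos t - p t * sin t) t := by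
    intro t
    rw [hDy]
    have h1 := (hpd t).mul (hasDerivAt_cos t)
    exact h1.congr_deriv (by ring)
  have hDDx : D (D x) = fun t => -(deriv p t * sin t + p t * cos t) / p t ^ 2 := by
    funext t
    rw [hD, (hderDx t).deriv, hr23]
  have hDDy : D (D y) = fun t => (deriv p t * cos t - p t * sin t) / p t ^ 2 := by
    funext t
    rw [hD, (hderDy t).deriv, hr23]
  -- third-order: D (D (D x)) and D (D (D y))
  have hD3x : ∀ t, D (D (D x)) t
      = (p t ^ 2 - p t * deriv (deriv p) t + 2 * deriv p t ^ 2) * sin t / p t ^ 5 := by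
    intro t
    have h0 := (hppos t).ne'
    have hnum : HasDerivAt (fun u => -(deriv p u * sin u + p u * cos u))
        (-((deriv (deriv p) t * sin t + deriv p t * cos t)
            + (deriv p t * cos t + p t * (-sin t)))) t :=
      (((hp'd t).mul (hasDerivAt_sin t)).add ((hpd t).mul (hasDerivAt_cos t))).neg
    have hden : HasDerivAt (fun u => p u ^ 2) (2 * p t ^ 1 * deriv p t) t := (hpd t).pow 2
    have hq : HasDerivAt (fun u => -(deriv p u * sin u + p u * cos u) / p u ^ 2) _ t := hnum.div hden (by positivity)
    rw [hD, hDDx, hq.deriv, hr23]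
    field_simp
    ring
  have hD3y : ∀ t, D (D (D y)) t
      = -((p t ^ 2 - p t * deriv (deriv p) t + 2 * deriv p t ^ 2) * cos t) / p t ^ 5 := by
    intro t
    have h0 := (hppos t).ne'
    have hnum : HasDerivAt (fun u => deriv p u * cos u - p u * sin u)
        ((deriv (deriv p) t * cos t + deriv p t * (-sin t))
          - (deriv p t * sin t + p t * cos t)) t :=
      ((hp'd t).mul (hasDerivAt_cos t)).sub ((hpd t).mul (hasDerivAt_sin t))
    have hden : HasDerivAt (fun u => p u ^ 2) (2 * p t ^ 1 * deriv p t) t := (hpd t).pow 2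
    have hq : HasDerivAt (fun u => (deriv p u * cos u - p u * sin u) / p u ^ 2) _ t := hnum.div hden (by positivity)
    rw [hD, hDDy, hq.deriv, hr23]
    field_simp
    ring
  -- affine curvature
  have hηval : ∀ t, η t
      = (p t ^ 2 - p t * deriv (deriv p) t + 2 * deriv p t ^ 2) / p t ^ 6 := by
    intro t
    have h0 := (hppos t).ne'
    have pyth := sin_sq_add_cos_sq t
    rw [hη, hD3x, hD3y, hDDx, hDDy]
    field_simp
    linear_combination ((p t ^ 2 - p t * deriv (deriv p) t + 2 * deriv p t ^ 2) * p t) * pyth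
  -- Fbar
  have hFb : Fbar = fun t => f t * p t := funext hFbar
  have hderFb : ∀ t, HasDerivAt Fbar (deriv f t * p t + f t * deriv p t) t := by
    intro t
    rw [hFb]
    exact (hfd t).mul (hpd t)
  have hDFb : D Fbar = fun t => (deriv f t * p t + f t * deriv p t) / p t ^ 2 := by
    funext t
    rw [hD, (hderFb t).deriv, hr23]
  have hDDFb : ∀ t, D (D Fbar) t
      = (deriv (deriv f) t * p t ^ 2 + f t * p t * deriv (deriv p) t
          - 2 * f t * deriv p t ^ 2) / p t ^ 5 := by
    intro t
    have h0 := (hppos t).ne'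
    have hnum : HasDerivAt (fun u => deriv f u * p u + f u * deriv p u)
        ((deriv (deriv f) t * p t + deriv f t * deriv p t)
          + (deriv f t * deriv p t + f t * deriv (deriv p) t)) t :=
      ((hf'd t).mul (hpd t)).add ((hfd t).mul (hp'd t))
    have hden : HasDerivAt (fun u => p u ^ 2) (2 * p t ^ 1 * deriv p t) t := (hpd t).pow 2
    have hq : HasDerivAt (fun u => (deriv f u * p u + f u * deriv p u) / p u ^ 2) _ t := hnum.div hden (by positivity)
    rw [hD, hDFb, hq.deriv, hr23]
    field_simp
    ring
  -- conclusion
  intro θ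
  have h0 := (hppos θ).ne'
  have hFbθ : Fbar θ = f θ * p θ := by rw [hFb]
  have hrθ : r θ = p θ ^ 3 := (hpcube θ).symm
  rw [hDDFb, hηval, hFbθ, hrθ]
  field_simp
  ring
end
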